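/- Let H be a complex Hilbert space and A a compact self-adjoint operator on H. Then A has at most finitely many negative eigenvalues (counted with multiplicity) if and only if there exists a finite dimensional subspace V ⊆ H with ⟨A g, g⟩ ≥ 0 for all g ∈ V^⊥. -/

import Mathlib

/-!
Since the eigenspaces of a self-adjoint operator are mutually orthogonal, the form `re ⟪A x, x⟫`
is negative definite on the span `N` of the eigenvectors with negative eigenvalues.
If it is nonnegative on `Vᗮ`, then `N ∩ Vᗮ = 0`, so the orthogonal projection onto `V` is
injective on `N` and `dim N ≤ dim V`. Conversely, if `N` is finite dimensional take `V = N`: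
the restriction of `A` to the invariant subspace `Nᗮ` is compact and self-adjoint without negative
eigenvalues, hence by the Fredholm alternative has nonnegative spectrum, i.e. is positive.
-/

open Module End RCLike
open scoped InnerProductSpace

section NegativeEigenspace

variable {𝕜 E : Type*} [RCLike 𝕜] [NormedAddCommGroup E] [InnerProductSpace 𝕜 E]

def negativeEigenspace (T : End 𝕜 E) : Submodule 𝕜 E :=
  ⨆ μ : {x : ℝ // x < 0}, eigenspace T (μ : 𝕜)

lemma eigenspace_le_negativeEigenspace (T : End 𝕜 E) {μ : ℝ} (hμ : μ < 0) :
    eigenspace T (μ : 𝕜) ≤ negativeEigenspace T :=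
  le_iSup (fun μ : {x : ℝ // x < 0} => eigenspace T (μ : 𝕜)) ⟨μ, hμ⟩

lemma negativeEigenspace_mem_invtSubmodule (T : End 𝕜 E) :
    negativeEigenspace T ∈ T.invtSubmodule :=
  (mem_invtSubmodule T).mpr <| iSup_le fun μ =>
    ((mem_invtSubmodule T).mp (eigenspace_mem_invtSubmodule T _)).trans
      (Submodule.comap_mono (le_iSup (fun μ : {x : ℝ // x < 0} => eigenspace T (μ : 𝕜)) μ))

lemma LinearMap.IsSymmetric.re_inner_apply_self_neg_of_mem_negativeEigenspace
    {T : End 𝕜 E} (hT : T.IsSymmetric) {x : E} (hx : x ∈ negativeEigenspace T) (hx0 : x ≠ 0) :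
    re ⟪T x, x⟫_𝕜 < 0 := by
  classical
  obtain ⟨f, hf, rfl⟩ := (Submodule.mem_iSup_iff_exists_finsupp _ _).mp hx
  have hTf (i : {x : ℝ // x < 0}) : T (f i) = ((i : ℝ) : 𝕜) • f i := mem_eigenspace_iff.mp (hf i)
  have horth := hT.orthogonalFamily_eigenspaces.comp
    (f := fun μ : {x : ℝ // x < 0} => ((μ : ℝ) : 𝕜)) fun μ ν h => Subtype.ext (ofReal_injective h)
  have hsum : ⟪T (f.sum fun _ v => v), f.sum fun _ v => v⟫_𝕜 =
      ∑ i ∈ f.support, (((i : ℝ) * ‖f i‖ ^ 2 : ℝ) : 𝕜) := by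
    have := horth.inner_sum (fun i => ⟨((i : ℝ) : 𝕜) • f i, Submodule.smul_mem _ _ (hf i)⟩)
      (fun i => ⟨f i, hf i⟩) f.support
    simpa [Finsupp.sum, map_sum, hTf, inner_smul_left, inner_self_eq_norm_sq_to_K] using this
  rw [hsum, map_sum]
  simp only [ofReal_re]
  refine Finset.sum_neg (fun i hi => mul_neg_of_neg_of_pos i.2 ?_) ?_
  · exact pow_pos (norm_pos_iff.mpr (Finsupp.mem_support_iff.mp hi)) 2
  · exact Finsupp.support_nonempty_iff.mpr (by rintro rfl; simp at hx0)

lemma Submodule.finiteDimensional_of_disjoint_orthogonal {N V : Submodule 𝕜 E}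
    [FiniteDimensional 𝕜 V] (h : Disjoint N Vᗮ) : FiniteDimensional 𝕜 N := by
  refine Module.Finite.of_injective (V.orthogonalProjectionOnto.toLinearMap ∘ₗ N.subtype) ?_
  rw [← LinearMap.ker_eq_bot, LinearMap.ker_comp, Submodule.ker_orthogonalProjectionOnto,
    ← Submodule.disjoint_iff_comap_eq_bot]
  exact h

end NegativeEigenspace

namespace IsCompactOperator

variable {H : Type*} [NormedAddCommGroup H] [InnerProductSpace ℂ H] [CompleteSpace H]

lemma isPositive_of_forall_not_hasEigenvalue_neg {T : H →L[ℂ] H} (hT : IsCompactOperator T)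
    (hsa : IsSelfAdjoint T) (h : ∀ μ : ℝ, μ < 0 → ¬HasEigenvalue (T : End ℂ H) μ) :
    T.IsPositive := by
  rw [← ContinuousLinearMap.nonneg_iff_isPositive,
    StarOrderedRing.nonneg_iff_spectrum_nonneg (R := ℝ) T hsa]
  intro μ hμ
  by_contra! hneg
  exact h μ hneg <| (hT.hasEigenvalue_iff_mem_spectrum (by exact_mod_cast hneg.ne)).mpr
    (spectrum.algebraMap_mem ℂ hμ)

lemma re_inner_apply_self_nonneg_of_mem_orthogonal_negativeEigenspace {A : H →L[ℂ] H}
    (hA : IsCompactOperator A) (hsa : IsSelfAdjoint A) {g : H}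
    (hg : g ∈ (negativeEigenspace (A : End ℂ H))ᗮ) : 0 ≤ re ⟪A g, g⟫_ℂ := by
  set N := negativeEigenspace (A : End ℂ H)
  have hsym := hsa.isSymmetric
  have hinv : ∀ x ∈ Nᗮ, A x ∈ Nᗮ :=
    hsym.orthogonalComplement_mem_invtSubmodule (negativeEigenspace_mem_invtSubmodule _)
  have hS : (A.restrict hinv).IsPositive := by
    refine isPositive_of_forall_not_hasEigenvalue_neg (hA.restrict' hinv)
      (ContinuousLinearMap.isSelfAdjoint_iff_isSymmetric.mpr (hsym.restrict_invariant hinv)) ?_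
    intro μ hμ hμS
    obtain ⟨x, hx, hx0⟩ := hμS.exists_hasEigenvector
    have hxN : (x : H) ∈ N := eigenspace_le_negativeEigenspace _ hμ
      (mem_eigenspace_iff.mpr (congrArg Subtype.val (mem_eigenspace_iff.mp hx)))
    exact hx0 (Subtype.ext (Submodule.disjoint_def.mp N.orthogonal_disjoint _ hxN x.2))
  exact hS.re_inner_nonneg_left ⟨g, hg⟩

end IsCompactOperator

/-- A compact self-adjoint operator has at most finitely many negative eigenvalues
(counted with multiplicity) iff `⟨A g, g⟩ ≥ 0` for all `g` in the orthogonal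
complement of some finite dimensional subspace. -/
theorem finitely_many_negative_eigenvalues_iff
    {H : Type*} [NormedAddCommGroup H] [InnerProductSpace ℂ H] [CompleteSpace H]
    (A : H →L[ℂ] H) (hA : IsCompactOperator A) (hsa : IsSelfAdjoint A) :
    FiniteDimensional ℂ
        ↥(⨆ μ : {x : ℝ // x < 0},
          Module.End.eigenspace (A : H →ₗ[ℂ] H) ((μ : ℝ) : ℂ)) ↔
      ∃ V : Submodule ℂ H, FiniteDimensional ℂ V ∧
        ∀ g ∈ Vᗮ, 0 ≤ (inner ℂ (A g) g : ℂ).re := by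
  change FiniteDimensional ℂ (negativeEigenspace (A : End ℂ H)) ↔ _
  constructor
  · exact fun hN => ⟨_, hN, fun g hg =>
      hA.re_inner_apply_self_nonneg_of_mem_orthogonal_negativeEigenspace hsa hg⟩
  · rintro ⟨V, hV, hpos⟩
    refine Submodule.finiteDimensional_of_disjoint_orthogonal (V := V)
      (Submodule.disjoint_def.mpr fun x hxN hxV => ?_)
    by_contra hx0
    exact (hpos x hxV).not_gt
      (hsa.isSymmetric.re_inner_apply_self_neg_of_mem_negativeEigenspace hxN hx0)
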